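/- Let d ≥ 2 and m ≥ 3d. The set of pairs (A,b) ∈ C^{m×d} × C^m that are affine phase retrievable for C^d is not an open subset of C^{m×d} × C^m. -/

import Mathlib

/-!
Three measurements `|z|`, `|z + 1|`, `|z + i|` determine a complex number `z`, so the frame
consisting of each coordinate vector `e_i` taken three times, with shifts `0, 1, i`, is affine phase
retrievable (extra rows are set to zero). Perturbing one row `e_{i₀}` to `e_{i₀} + t e_{i₁}`
destroys this for every `t ≠ 0`: `0` and `-1 - i` have the same distances to `-1` and `-i`, and the
second coordinate can be chosen so that the perturbed row does not separate them either.
-/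

open Complex Filter Topology

theorem Complex.eq_of_norm_eq_of_norm_add_one_eq_of_norm_add_I_eq {z w : ℂ} (h₀ : ‖z‖ = ‖w‖)
    (h₁ : ‖z + 1‖ = ‖w + 1‖) (h₂ : ‖z + I‖ = ‖w + I‖) : z = w := by
  have hsq : ∀ {u v : ℂ}, ‖u‖ = ‖v‖ → normSq u = normSq v := fun h => by
    rw [← Complex.sq_norm, ← Complex.sq_norm, h]
  have e₀ := hsq h₀
  have e₁ := hsq h₁
  have e₂ := hsq h₂
  simp only [normSq_apply, add_re, add_im, one_re, one_im, I_re, I_im] at e₀ e₁ e₂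
  apply Complex.ext <;> nlinarith

theorem not_isOpen_of_continuousAt {T X : Type*} [TopologicalSpace T] [TopologicalSpace X]
    {a : T} [(𝓝[≠] a).NeBot] {f : T → X} {S : Set X} (hf : ContinuousAt f a) (ha : f a ∈ S)
    (hS : ∀ t ≠ a, f t ∉ S) : ¬ IsOpen S := fun hopen => by
  have hev : ∀ᶠ t in 𝓝[≠] a, f t ∈ S :=
    nhdsWithin_le_nhds (hf.preimage_mem_nhds (hopen.mem_nhds ha))
  obtain ⟨t, htS, hta⟩ := (hev.and self_mem_nhdsWithin).exists
  exact hS t hta htS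

def IsAffinePhaseRetrievable {𝕜 E ι : Type*} [RCLike 𝕜] [NormedAddCommGroup E]
    [InnerProductSpace 𝕜 E] (a : ι → E) (b : ι → 𝕜) : Prop :=
  Function.Injective fun x : E => fun j => ‖(inner 𝕜 (a j) x : 𝕜) + b j‖

section Extend

variable {𝕜 E ι κ : Type*} [RCLike 𝕜] [NormedAddCommGroup E] [InnerProductSpace 𝕜 E]
  {e : ι → κ}

theorem Function.Injective.isAffinePhaseRetrievable_extend_zero_iff (he : e.Injective)
    {a : ι → E} {b : ι → 𝕜} :
    IsAffinePhaseRetrievable (e.extend a 0) (e.extend b 0) ↔ IsAffinePhaseRetrievable a b := by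
  have hmeas : (fun x : E => fun j => ‖(inner 𝕜 (e.extend a 0 j) x : 𝕜) + e.extend b 0 j‖) =
      (fun r : ι → ℝ => e.extend r 0) ∘ fun x : E => fun i => ‖(inner 𝕜 (a i) x : 𝕜) + b i‖ := by
    ext x j
    by_cases hj : ∃ i, e i = j
    · obtain ⟨i, rfl⟩ := hj
      simp only [Function.comp_apply, he.extend_apply]
    · simp only [Function.comp_apply, Function.extend_apply' _ _ _ hj, Pi.zero_apply,
        inner_zero_left, add_zero, norm_zero]
  rw [IsAffinePhaseRetrievable, hmeas, (Function.extend_injective he (0 : κ → ℝ)).of_comp_iff]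
  rfl

theorem Function.Injective.continuous_extend_zero (he : e.Injective) {X : Type*}
    [TopologicalSpace X] [Zero X] :
    Continuous fun a : ι → X => e.extend a 0 := by
  refine continuous_pi fun j => ?_
  by_cases hj : ∃ i, e i = j
  · obtain ⟨i, rfl⟩ := hj
    simp only [he.extend_apply]
    exact continuous_apply i
  · simp only [Function.extend_apply' _ _ _ hj]
    exact continuous_const

end Extend

theorem IsOpen.setOf_isAffinePhaseRetrievable_of_injective {𝕜 E ι κ : Type*} [RCLike 𝕜]
    [NormedAddCommGroup E] [InnerProductSpace 𝕜 E] {e : ι → κ} (he : e.Injective)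
    (h : IsOpen {p : (κ → E) × (κ → 𝕜) | IsAffinePhaseRetrievable p.1 p.2}) :
    IsOpen {p : (ι → E) × (ι → 𝕜) | IsAffinePhaseRetrievable p.1 p.2} := by
  have hcont : Continuous fun p : (ι → E) × (ι → 𝕜) => (e.extend p.1 0, e.extend p.2 0) :=
    (he.continuous_extend_zero.comp continuous_fst).prodMk
      (he.continuous_extend_zero.comp continuous_snd)
  simpa only [Set.preimage_ofPred_eq, he.isAffinePhaseRetrievable_extend_zero_iff] using
    h.preimage hcont

noncomputable section ThreePoint

variable {n : Type*} [Fintype n] [DecidableEq n]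

def threePointFrame : n × Fin 3 → EuclideanSpace ℂ n := fun j => EuclideanSpace.single j.1 1

def threePointShift : n × Fin 3 → ℂ := fun j => ![0, 1, I] j.2

def threePointPerturbation (i₀ i₁ : n) : n × Fin 3 → EuclideanSpace ℂ n :=
  Pi.single (i₀, 0) (EuclideanSpace.single i₁ 1)

theorem inner_threePointFrame (j : n × Fin 3) (x : EuclideanSpace ℂ n) :
    inner ℂ (threePointFrame j) x = x j.1 := by
  simp [threePointFrame, EuclideanSpace.inner_single_left]

theorem isAffinePhaseRetrievable_threePoint :
    IsAffinePhaseRetrievable (threePointFrame (n := n)) threePointShift := by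
  intro x y hxy
  have hmeas : ∀ i k, ‖x i + ![0, 1, I] k‖ = ‖y i + ![0, 1, I] k‖ := fun i k => by
    simpa only [inner_threePointFrame, threePointShift] using congrFun hxy (i, k)
  ext i
  refine Complex.eq_of_norm_eq_of_norm_add_one_eq_of_norm_add_I_eq ?_ (hmeas i 1) (hmeas i 2)
  simpa using hmeas i 0

theorem not_isAffinePhaseRetrievable_threePoint_perturbation {i₀ i₁ : n} (hi : i₀ ≠ i₁) {t : ℝ}
    (ht : t ≠ 0) :
    ¬ IsAffinePhaseRetrievable
      (threePointFrame + (t : ℂ) • threePointPerturbation i₀ i₁)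
      threePointShift := by
  intro h
  set u : EuclideanSpace ℂ n := EuclideanSpace.single i₁ (t : ℂ)⁻¹
  -- the perturbed row sees `0 + t * t⁻¹ = 1` and `-1 - i + 1 = -i`
  set v : EuclideanSpace ℂ n := u + EuclideanSpace.single i₀ (-1 - I)
  have huv : u ≠ v := by
    intro huv
    have := congrArg (· i₀) huv
    simp [u, v, Complex.ext_iff] at this
  refine huv (h (funext fun ⟨i, k⟩ => ?_))
  simp only [Pi.add_apply, Pi.smul_apply, inner_add_left, inner_smul_left, inner_threePointFrame,
    Complex.conj_ofReal, threePointPerturbation]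
  by_cases hi' : i = i₀
  · subst hi'
    have htu : (t : ℂ) * (t : ℂ)⁻¹ = 1 := mul_inv_cancel₀ (by exact_mod_cast ht)
    have h₁ : -1 - I + 1 = -I := by ring
    have h₂ : -1 - I + I = -1 := by ring
    fin_cases k <;> simp [u, v, threePointShift, hi, EuclideanSpace.inner_single_left, htu, h₁, h₂]
  · simp [hi', u, v]

theorem not_isOpen_setOf_isAffinePhaseRetrievable_threePoint {i₀ i₁ : n} (hi : i₀ ≠ i₁) :
    ¬ IsOpen {p : (n × Fin 3 → EuclideanSpace ℂ n) × (n × Fin 3 → ℂ) |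
      IsAffinePhaseRetrievable p.1 p.2} := by
  refine not_isOpen_of_continuousAt (a := (0 : ℝ))
    (f := fun t => (threePointFrame + (t : ℂ) • threePointPerturbation i₀ i₁, threePointShift))
    ?_ ?_ ?_
  · exact ((continuous_const.add (continuous_ofReal.smul continuous_const)).prodMk
      continuous_const).continuousAt
  · simpa using isAffinePhaseRetrievable_threePoint
  · exact fun t ht => not_isAffinePhaseRetrievable_threePoint_perturbation hi ht

end ThreePoint

theorem not_isOpen_setOf_isAffinePhaseRetrievable {n κ : Type*} [Fintype n] [DecidableEq n]
    [Nontrivial n] {e : n × Fin 3 → κ} (he : e.Injective) :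
    ¬ IsOpen {p : (κ → EuclideanSpace ℂ n) × (κ → ℂ) | IsAffinePhaseRetrievable p.1 p.2} :=
  fun h => by
    obtain ⟨i₀, i₁, hi⟩ := exists_pair_ne n
    exact not_isOpen_setOf_isAffinePhaseRetrievable_threePoint hi
      (h.setOf_isAffinePhaseRetrievable_of_injective he)

theorem stmt_14 (m d : ℕ) (hd : 2 ≤ d) (hm : 3 * d ≤ m) :
    ¬ IsOpen {p : (Fin m → EuclideanSpace ℂ (Fin d)) × (Fin m → ℂ) |
        Function.Injective
          (fun x : EuclideanSpace ℂ (Fin d) => fun j : Fin m =>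
            ‖(inner ℂ (p.1 j) x : ℂ) + p.2 j‖)} := by
  have : Nontrivial (Fin d) := Fin.nontrivial_iff_two_le.mpr hd
  have he : Function.Injective (Fin.castLE (by omega : d * 3 ≤ m) ∘ finProdFinEquiv) :=
    (Fin.castLE_injective _).comp finProdFinEquiv.injective
  exact not_isOpen_setOf_isAffinePhaseRetrievable he
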